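/- (Inversion formula for admissible cumulants.) Let M : S → ℂ with M(1) = 1 and let L be its admissible cumulants. Then for every s ∈ S⁺, L(s) = Σ_{u∈AP(s)} m(u|1_s) M(u), where M(u) = M(u_1)⋯M(u_p) for u = (u_1,…,u_p), 1_s is the one-block partition of s, and m is the Möbius function of the lattice AP(s). -/

import Mathlib

/-- The two-letter alphabet `{z, w}`. -/
inductive Letter | z | w
deriving DecidableEq

/-- Words: elements of the free monoid `S = FS({z,w})`. -/
abbrev Word := List Letter

/-- The letter of `s` at position `j` (defaulting to `z`). -/
def letterAt (s : Word) (j : ℕ) : Letter := s.getD j Letter.z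

/-- `P` is a partition of the finite set of positions `g ⊆ ℕ` into nonempty blocks. -/
def IsPartitionOn (g : Finset ℕ) (P : Finset (Finset ℕ)) : Prop :=
  (∀ b ∈ P, b.Nonempty) ∧ (P : Set (Finset ℕ)).PairwiseDisjoint id ∧ P.sup id = g

/-- The position `j` is inner with respect to the block `b`:
`j ∉ b` and `min b < j < max b`. -/
def InnerPos (j : ℕ) (b : Finset ℕ) : Prop :=
  j ∉ b ∧ ∃ i ∈ b, ∃ k ∈ b, i < j ∧ j < k

/-- A partition is admissible if no block contains a letter `w` that is inner
with respect to another block. -/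
def Admissible (s : Word) (P : Finset (Finset ℕ)) : Prop :=
  ∀ b ∈ P, ∀ b' ∈ P, b ≠ b' → ∀ j ∈ b, letterAt s j = Letter.w → ¬ InnerPos j b'

open scoped Classical in
/-- The set `AP(s)` of admissible partitions of the positions `g` of the word `s`. -/
noncomputable def APfin (s : Word) (g : Finset ℕ) : Finset (Finset (Finset ℕ)) :=
  g.powerset.powerset.filter fun P => IsPartitionOn g P ∧ Admissible s P

/-- The subword of `s` determined by a set of positions `b`. -/
def wordOf (s : Word) (b : Finset ℕ) : Word :=
  (b.sort (· ≤ ·)).map (letterAt s)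

/-- `L` is the family of admissible cumulants of the moment function `M`:
`M(s) = Σ_{u ∈ AP(s)} L(u₁)⋯L(u_p)` for every nonempty word `s`. -/
def IsCumulants (M L : Word → ℂ) : Prop :=
  ∀ s : Word, s ≠ [] →
    M s = ∑ P ∈ APfin s (Finset.range s.length), ∏ b ∈ P, L (wordOf s b)

/-- `P` refines `Q`: every block of `P` is contained in a block of `Q`. -/
def Refines (P Q : Finset (Finset ℕ)) : Prop := ∀ b ∈ P, ∃ c ∈ Q, b ⊆ c

open scoped Classical in
/-- `m` is the Möbius function of the lattice `AP(s)` of admissible partitions of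
the position set `g` of `s`: `m(u|u) = 1` and `m(u|v) = −Σ_{u ≤ t < v} m(u|t)`. -/
noncomputable def IsMobius (s : Word) (g : Finset ℕ)
    (m : Finset (Finset ℕ) → Finset (Finset ℕ) → ℂ) : Prop :=
  (∀ u ∈ APfin s g, m u u = 1) ∧
    ∀ u ∈ APfin s g, ∀ v ∈ APfin s g, Refines u v → u ≠ v →
      m u v = -∑ t ∈ (APfin s g).filter fun t => Refines u t ∧ Refines t v ∧ t ≠ v, m u t

/-!
Admissible partitions of `s`, ordered by refinement, form a finite poset, and the moment–cumulant
relation gives `M(u) = Σ_{v ≤ u} L(v)` for every `u ∈ AP(s)`: expanding `M` on each block of `u`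
yields a sum over tuples of admissible partitions of the blocks, and gluing such a tuple gives
exactly an admissible refinement of `u`, because `u` itself is admissible. (The relation for the
subword on a block `b` is transported along the increasing bijection `{0, …, |b| - 1} → b`, which
preserves letters and innerness.) Möbius inversion from below on `AP(s)` at the top element `1_s`
then recovers `L(s)`.
-/

open Finset

section MobiusInversion

variable {α R : Type*} [CommRing R] [DecidableEq α] {A : Finset α} {r : α → α → Prop}
  [DecidableRel r] {m : α → α → R}

theorem sum_mobius_filter_eq_ite (hrefl : ∀ u ∈ A, r u u)
    (htrans : ∀ u ∈ A, ∀ v ∈ A, ∀ w ∈ A, r u v → r v w → r u w)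
    (hanti : ∀ u ∈ A, ∀ v ∈ A, r u v → r v u → u = v) (hm₁ : ∀ u ∈ A, m u u = 1)
    (hm₂ : ∀ u ∈ A, ∀ v ∈ A, r u v → u ≠ v →
      m u v = -∑ t ∈ A with r u t ∧ r t v ∧ t ≠ v, m u t)
    {u v : α} (hu : u ∈ A) (hv : v ∈ A) :
    ∑ t ∈ A with r u t ∧ r t v, m u t = if u = v then 1 else 0 := by
  by_cases huv : r u v
  · rcases eq_or_ne u v with rfl | hne
    · have hsingle : {t ∈ A | r u t ∧ r t u} = {u} := by
        ext t
        simp only [mem_filter, mem_singleton]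
        refine ⟨fun ⟨ht, hut, htu⟩ => hanti t ht u hu htu hut, ?_⟩
        rintro rfl
        exact ⟨hu, hrefl t hu, hrefl t hu⟩
      rw [hsingle, sum_singleton, hm₁ u hu, if_pos rfl]
    · have hvmem : v ∈ {t ∈ A | r u t ∧ r t v} := mem_filter.2 ⟨hv, huv, hrefl v hv⟩
      rw [← add_sum_erase _ _ hvmem, if_neg hne, hm₂ u hu v hv huv hne, neg_add_eq_zero]
      congr 1
      ext t
      simp only [mem_erase, mem_filter]
      tauto
  · rw [if_neg (fun h : u = v => huv (h ▸ hrefl u hu)), sum_eq_zero]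
    intro t ht
    obtain ⟨ht, hut, htv⟩ := mem_filter.1 ht
    exact absurd (htrans u hu t ht v hv hut htv) huv

open Matrix in
theorem sum_mobius_mul_eq (hrefl : ∀ u ∈ A, r u u)
    (htrans : ∀ u ∈ A, ∀ v ∈ A, ∀ w ∈ A, r u v → r v w → r u w)
    (hanti : ∀ u ∈ A, ∀ v ∈ A, r u v → r v u → u = v) (hm₁ : ∀ u ∈ A, m u u = 1)
    (hm₂ : ∀ u ∈ A, ∀ v ∈ A, r u v → u ≠ v →
      m u v = -∑ t ∈ A with r u t ∧ r t v ∧ t ≠ v, m u t)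
    {f g : α → R} (hf : ∀ u ∈ A, f u = ∑ v ∈ A with r v u, g v) {t : α} (ht : t ∈ A) :
    ∑ u ∈ A with r u t, m u t * f u = g t := by
  let ζ : Matrix A A R := .of fun u v => if r u v then 1 else 0
  let μ : Matrix A A R := .of fun u v => if r u v then m u v else 0
  have hμζ : μ * ζ = 1 := by
    ext u v
    rw [mul_apply, one_apply]
    simp only [Subtype.ext_iff]
    rw [← sum_mobius_filter_eq_ite hrefl htrans hanti hm₁ hm₂ u.2 v.2, sum_filter,
      ← sum_coe_sort A]
    refine sum_congr rfl fun w _ => ?_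
    simp only [μ, ζ, of_apply, mul_boole, ite_and]
    split_ifs <;> rfl
  -- The recursion for `m` only makes `μ` a left inverse of `ζ`; being square, it is a two-sided one.
  have hζμ : ζ * μ = 1 := mul_eq_one_comm.1 hμζ
  have hfζ : (fun u : A => f u) = (fun v : A => g v) ᵥ* ζ := by
    ext u
    rw [hf u u.2, vecMul, dotProduct, sum_filter, ← sum_coe_sort A]
    simp only [ζ, of_apply, mul_ite, mul_one, mul_zero]
  have hgμ : (fun u : A => f u) ᵥ* μ = fun v : A => g v := by
    rw [hfζ, vecMul_vecMul, hζμ, vecMul_one]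
  rw [← congrFun hgμ ⟨t, ht⟩, vecMul, dotProduct, sum_filter, ← sum_coe_sort A]
  simp only [μ, of_apply, mul_ite, mul_zero, mul_comm]

end MobiusInversion

open scoped Classical

section Partitions

variable {s : Word} {g b : Finset ℕ} {P Q u v : Finset (Finset ℕ)}

theorem mem_APfin : P ∈ APfin s g ↔ IsPartitionOn g P ∧ Admissible s P := by
  refine mem_filter.trans (and_iff_right_of_imp fun ⟨hP, _⟩ => mem_powerset.2 fun b hb => ?_)
  rw [mem_powerset, ← hP.2.2]
  exact le_sup (f := id) hb

theorem IsPartitionOn.subset (hP : IsPartitionOn g P) (hb : b ∈ P) : b ⊆ g :=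
  hP.2.2 ▸ le_sup (f := id) hb

theorem IsPartitionOn.eq_of_mem (hP : IsPartitionOn g P) {b b' : Finset ℕ} (hb : b ∈ P)
    (hb' : b' ∈ P) {x : ℕ} (hx : x ∈ b) (hx' : x ∈ b') : b = b' :=
  hP.2.1.elim_finset hb hb' x hx hx'

theorem Admissible.mono (hQ : Admissible s Q) (hPQ : P ⊆ Q) : Admissible s P :=
  fun b hb b' hb' => hQ b (hPQ hb) b' (hPQ hb')

theorem refines_refl (P : Finset (Finset ℕ)) : Refines P P := fun b hb => ⟨b, hb, subset_rfl⟩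

theorem Refines.trans (hPQ : Refines P Q) (hQR : Refines Q u) : Refines P u := by
  intro b hb
  obtain ⟨c, hc, hbc⟩ := hPQ b hb
  obtain ⟨d, hd, hcd⟩ := hQR c hc
  exact ⟨d, hd, hbc.trans hcd⟩

theorem IsPartitionOn.subset_of_refines (hP : IsPartitionOn g P) (hPQ : Refines P Q)
    (hQP : Refines Q P) : P ⊆ Q := by
  intro b hb
  obtain ⟨c, hc, hbc⟩ := hPQ b hb
  obtain ⟨b', hb', hcb'⟩ := hQP c hc
  obtain ⟨x, hx⟩ := hP.1 b hb
  obtain rfl := hP.eq_of_mem hb hb' hx (hcb' (hbc hx))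
  rwa [hbc.antisymm hcb']

theorem IsPartitionOn.eq_of_refines {g' : Finset ℕ} (hP : IsPartitionOn g P)
    (hQ : IsPartitionOn g' Q) (hPQ : Refines P Q) (hQP : Refines Q P) : P = Q :=
  (hP.subset_of_refines hPQ hQP).antisymm (hQ.subset_of_refines hQP hPQ)

theorem singleton_mem_APfin (hg : g.Nonempty) : {g} ∈ APfin s g := by
  refine mem_APfin.2 ⟨⟨?_, by simp, sup_singleton⟩, ?_⟩
  · simpa using hg
  · intro b hb b' hb' hne
    rw [mem_singleton] at hb hb'
    exact absurd (hb.trans hb'.symm) hne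

theorem IsPartitionOn.refines_singleton (hP : IsPartitionOn g P) : Refines P {g} :=
  fun _ hb => ⟨g, mem_singleton_self g, hP.subset hb⟩

theorem filter_subset_mem_APfin (hu : IsPartitionOn g u) (hv : v ∈ APfin s g)
    (hvu : Refines v u) (hb : b ∈ u) : {c ∈ v | c ⊆ b} ∈ APfin s b := by
  obtain ⟨⟨hne, hdisj, hsup⟩, hadm⟩ := mem_APfin.1 hv
  refine mem_APfin.2 ⟨⟨fun c hc => hne c (mem_filter.1 hc).1,
    hdisj.subset (coe_subset.2 (filter_subset _ v)), ?_⟩, hadm.mono (filter_subset _ v)⟩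
  refine le_antisymm (Finset.sup_le fun c hc => (mem_filter.1 hc).2) fun x hxb => ?_
  obtain ⟨c, hc, hxc⟩ := mem_sup.1 (hsup.symm ▸ hu.subset hb hxb)
  obtain ⟨b', hb', hcb'⟩ := hvu c hc
  obtain rfl := hu.eq_of_mem hb hb' hxb (hcb' hxc)
  exact mem_sup.2 ⟨c, mem_filter.2 ⟨hc, hcb'⟩, hxc⟩

theorem biUnion_mem_APfin (hu : u ∈ APfin s g) {p : u → Finset (Finset ℕ)}
    (hp : ∀ b : u, p b ∈ APfin s b) : univ.biUnion p ∈ APfin s g := by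
  obtain ⟨⟨-, hudisj, husup⟩, huadm⟩ := mem_APfin.1 hu
  have hblock : ∀ (b : u) c, c ∈ p b → c ⊆ b := fun b c hc => (mem_APfin.1 (hp b)).1.subset hc
  have hdisj : ∀ b b' : u, b ≠ b' → Disjoint (b : Finset ℕ) b' := fun b b' hne =>
    hudisj b.2 b'.2 (Subtype.coe_ne_coe.2 hne)
  refine mem_APfin.2 ⟨⟨?_, ?_, ?_⟩, ?_⟩
  · intro c hc
    obtain ⟨b, -, hc⟩ := mem_biUnion.1 hc
    exact (mem_APfin.1 (hp b)).1.1 c hc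
  · intro c hc c' hc' hne
    obtain ⟨b, -, hc⟩ := mem_biUnion.1 hc
    obtain ⟨b', -, hc'⟩ := mem_biUnion.1 hc'
    rcases eq_or_ne b b' with rfl | hbb'
    · exact (mem_APfin.1 (hp b)).1.2.1 hc hc' hne
    · exact (hdisj b b' hbb').mono (hblock b c hc) (hblock b' c' hc')
  · rw [sup_biUnion, ← husup, univ_eq_attach, ← sup_attach u id]
    exact sup_congr rfl fun b _ => (mem_APfin.1 (hp b)).1.2.2
  · intro c hc c' hc' hne j hj hw ⟨_, i, hi, k, hk, hij, hjk⟩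
    obtain ⟨b, -, hc⟩ := mem_biUnion.1 hc
    obtain ⟨b', -, hc'⟩ := mem_biUnion.1 hc'
    rcases eq_or_ne b b' with rfl | hbb'
    · exact (mem_APfin.1 (hp b)).2 c hc c' hc' hne j hj hw ⟨‹_›, i, hi, k, hk, hij, hjk⟩
    -- a `w` in `b` that is inner to `c' ⊆ b'` is inner to `b'` itself
    · refine huadm b b.2 b' b'.2 (Subtype.coe_ne_coe.2 hbb') j (hblock b c hc hj) hw
        ⟨disjoint_left.1 (hdisj b b' hbb') (hblock b c hc hj), i, hblock b' c' hc' hi,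
          k, hblock b' c' hc' hk, hij, hjk⟩

end Partitions

section Gluing

variable {R : Type*} [CommSemiring R] {s : Word} {g : Finset ℕ} {u : Finset (Finset ℕ)}

theorem prod_sum_APfin_eq_sum_refines (hu : u ∈ APfin s g) (φ : Finset ℕ → R) :
    ∏ b ∈ u, ∑ Q ∈ APfin s b, ∏ c ∈ Q, φ c =
      ∑ v ∈ APfin s g with Refines v u, ∏ c ∈ v, φ c := by
  have hu' := (mem_APfin.1 hu).1
  have hunique : ∀ {p : u → Finset (Finset ℕ)}, (∀ b : u, p b ∈ APfin s b) →
      ∀ {b b' : u} {c}, c ∈ p b → c ⊆ b' → b = b' := by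
    intro p hp b b' c hc hcb'
    have hc' := (mem_APfin.1 (hp b)).1
    obtain ⟨x, hx⟩ := hc'.1 c hc
    exact Subtype.ext (hu'.eq_of_mem b.2 b'.2 (hc'.subset hc hx) (hcb' hx))
  rw [← prod_coe_sort u, prod_univ_sum]
  refine sum_nbij' (fun p => univ.biUnion p) (fun v b => {c ∈ v | c ⊆ b}) ?_ ?_ ?_ ?_ ?_
  · intro p hp
    rw [Fintype.mem_piFinset] at hp
    refine mem_filter.2 ⟨biUnion_mem_APfin hu hp, fun c hc => ?_⟩
    obtain ⟨b, -, hc⟩ := mem_biUnion.1 hc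
    exact ⟨b, b.2, (mem_APfin.1 (hp b)).1.subset hc⟩
  · intro v hv
    obtain ⟨hv, hvu⟩ := mem_filter.1 hv
    exact Fintype.mem_piFinset.2 fun b => filter_subset_mem_APfin hu' hv hvu b.2
  · intro p hp
    rw [Fintype.mem_piFinset] at hp
    funext b
    ext c
    simp only [mem_filter, mem_biUnion, mem_univ, true_and]
    constructor
    · rintro ⟨⟨b', hc⟩, hcb⟩
      rwa [← hunique hp hc hcb]
    · exact fun hc => ⟨⟨b, hc⟩, (mem_APfin.1 (hp b)).1.subset hc⟩
  · intro v hv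
    obtain ⟨-, hvu⟩ := mem_filter.1 hv
    ext c
    simp only [mem_filter, mem_biUnion, mem_univ, true_and]
    refine ⟨fun ⟨_, hc, _⟩ => hc, fun hc => ?_⟩
    obtain ⟨b, hb, hcb⟩ := hvu c hc
    exact ⟨⟨b, hb⟩, hc, hcb⟩
  · intro p hp
    rw [Fintype.mem_piFinset] at hp
    refine (prod_biUnion fun b _ b' _ hbb' => ?_).symm
    exact disjoint_left.2 fun c hc hc' =>
      hbb' (hunique hp hc ((mem_APfin.1 (hp b')).1.subset hc'))

end Gluing

theorem Finset.image_image_of_leftInvOn {α β : Type*} [DecidableEq α] [DecidableEq β]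
    {f : α → β} {g : β → α} {s : Finset α} (h : Set.LeftInvOn g f s) :
    (s.image f).image g = s := by
  rw [← coe_inj, coe_image, coe_image]
  exact h.image_image

section Relabelling

variable {t t' : Word} {dom ran c : Finset ℕ} {φ : ℕ → ℕ}

theorem InnerPos.of_image (hφ : StrictMonoOn φ dom) (hc : c ⊆ dom) {j : ℕ} (hj : j ∈ dom)
    (h : InnerPos (φ j) (c.image φ)) : InnerPos j c := by
  obtain ⟨hjc, _, hφi, _, hφk, hij, hjk⟩ := h
  obtain ⟨i, hi, rfl⟩ := mem_image.1 hφi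
  obtain ⟨k, hk, rfl⟩ := mem_image.1 hφk
  exact ⟨fun hj' => hjc (mem_image_of_mem φ hj'), i, hi, k, hk,
    (hφ.lt_iff_lt (hc hi) hj).1 hij, (hφ.lt_iff_lt hj (hc hk)).1 hjk⟩

theorem image_mem_APfin (hφ : StrictMonoOn φ dom)
    (hlet : ∀ j ∈ dom, letterAt t' (φ j) = letterAt t j) {P : Finset (Finset ℕ)}
    (hP : P ∈ APfin t dom) : P.image (image φ) ∈ APfin t' (dom.image φ) := by
  obtain ⟨hpart, hadm⟩ := mem_APfin.1 hP
  refine mem_APfin.2 ⟨⟨?_, ?_, ?_⟩, ?_⟩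
  · simp only [mem_image]
    rintro _ ⟨c, hc, rfl⟩
    exact (hpart.1 c hc).image φ
  · simp only [coe_image]
    rintro _ ⟨c, hc, rfl⟩ _ ⟨c', hc', rfl⟩ hne
    refine disjoint_left.2 ?_
    simp only [id, mem_image]
    rintro _ ⟨x, hx, rfl⟩ ⟨x', hx', hxx'⟩
    obtain rfl := hφ.injOn (hpart.subset hc' hx') (hpart.subset hc hx) hxx'
    exact hne (by rw [hpart.eq_of_mem hc hc' hx hx'])
  · rw [← hpart.2.2, sup_image, sup_eq_biUnion, sup_eq_biUnion, biUnion_image]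
    rfl
  · rintro _ hd _ hd' hne _ hφj hw hinner
    obtain ⟨c, hc, rfl⟩ := mem_image.1 hd
    obtain ⟨c', hc', rfl⟩ := mem_image.1 hd'
    obtain ⟨j, hj, rfl⟩ := mem_image.1 hφj
    have hjdom := hpart.subset hc hj
    refine hadm c hc c' hc' (fun h => hne (by rw [h])) j hj ?_
      (hinner.of_image hφ (hpart.subset hc') hjdom)
    rw [← hlet j hjdom, hw]

theorem wordOf_image (hφ : StrictMonoOn φ c)
    (hlet : ∀ j ∈ c, letterAt t' (φ j) = letterAt t j) : wordOf t' (c.image φ) = wordOf t c := by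
  have hsort : (c.image φ).sort (· ≤ ·) = (c.sort (· ≤ ·)).map φ := by
    rw [Finset.sort, image_val_of_injOn hφ.injOn]
    exact (Multiset.map_sort φ c.val _ _ fun a ha b hb => (hφ.le_iff_le ha hb).symm).symm
  rw [wordOf, wordOf, hsort, List.map_map]
  exact List.map_congr_left fun j hj => hlet j ((mem_sort _).1 hj)

theorem sum_prod_wordOf_APfin_image {R : Type*} [CommSemiring R] (hφ : StrictMonoOn φ dom)
    (hran : dom.image φ = ran) (hlet : ∀ j ∈ dom, letterAt t' (φ j) = letterAt t j)
    (L : Word → R) :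
    ∑ Q ∈ APfin t' ran, ∏ c ∈ Q, L (wordOf t' c) = ∑ P ∈ APfin t dom, ∏ c ∈ P, L (wordOf t c) := by
  subst hran
  set ψ := Function.invFunOn φ dom
  have hψφ : Set.LeftInvOn ψ φ dom := hφ.injOn.leftInvOn_invFunOn
  have hφψ : Set.LeftInvOn φ ψ (dom.image φ) := by
    rw [coe_image]
    rintro _ ⟨i, hi, rfl⟩
    rw [hψφ hi]
  have hψ : StrictMonoOn ψ (dom.image φ) := by
    rw [coe_image]
    rintro _ ⟨i, hi, rfl⟩ _ ⟨k, hk, rfl⟩ h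
    rw [hψφ hi, hψφ hk]
    exact (hφ.lt_iff_lt hi hk).1 h
  have hlet' : ∀ j ∈ dom.image φ, letterAt t (ψ j) = letterAt t' j := by
    simp only [mem_image]
    rintro _ ⟨i, hi, rfl⟩
    rw [hψφ hi, hlet i hi]
  have hblocks : Set.LeftInvOn (image ψ) (image φ) {c | c ⊆ dom} := fun c hc =>
    image_image_of_leftInvOn (hψφ.mono hc)
  symm
  refine sum_nbij' (image (image φ)) (image (image ψ)) (fun P hP => image_mem_APfin hφ hlet hP)
    (fun Q hQ => image_image_of_leftInvOn hψφ ▸ image_mem_APfin hψ hlet' hQ) ?_ ?_ ?_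
  · exact fun P hP => image_image_of_leftInvOn (hblocks.mono fun c hc => (mem_APfin.1 hP).1.subset hc)
  · refine fun Q hQ => image_image_of_leftInvOn fun c hc => image_image_of_leftInvOn (hφψ.mono ?_)
    exact (mem_APfin.1 hQ).1.subset hc
  · intro P hP
    have hsub : ∀ c ∈ P, c ⊆ dom := fun c hc => (mem_APfin.1 hP).1.subset hc
    rw [prod_image ((hblocks.mono hsub).injOn)]
    exact prod_congr rfl fun c hc => by
      rw [wordOf_image (hφ.mono (hsub c hc)) fun j hj => hlet j (hsub c hc hj)]

end Relabelling

section Subwords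

variable {s : Word} {b : Finset ℕ}

theorem length_wordOf (s : Word) (b : Finset ℕ) : (wordOf s b).length = b.card := by
  rw [wordOf, List.length_map, length_sort]

theorem wordOf_range (s : Word) : wordOf s (range s.length) = s := by
  refine List.ext_getElem (by simp [length_wordOf]) fun i _ hi => ?_
  simp [wordOf, letterAt, List.getElem?_eq_getElem hi]

theorem strictMonoOn_sort_getD (b : Finset ℕ) :
    StrictMonoOn (fun i => (b.sort (· ≤ ·)).getD i 0) (range b.card) := by
  intro i hi k hk hik
  rw [coe_range, Set.mem_Iio, ← length_sort (· ≤ ·)] at hi hk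
  simp only [List.getD_eq_getElem _ _ hi, List.getD_eq_getElem _ _ hk]
  exact (sortedLT_sort b).getElem_lt_getElem_iff.2 hik

theorem image_sort_getD_range (b : Finset ℕ) :
    (range b.card).image (fun i => (b.sort (· ≤ ·)).getD i 0) = b := by
  ext x
  rw [mem_image, ← mem_sort (· ≤ ·), List.mem_iff_getElem]
  simp only [mem_range, ← length_sort (α := ℕ) (· ≤ ·)]
  constructor
  · rintro ⟨i, hi, rfl⟩
    exact ⟨i, hi, (List.getD_eq_getElem _ _ hi).symm⟩
  · rintro ⟨i, hi, rfl⟩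
    exact ⟨i, hi, List.getD_eq_getElem _ _ hi⟩

theorem letterAt_sort_getD {i : ℕ} (hi : i ∈ range b.card) :
    letterAt s ((b.sort (· ≤ ·)).getD i 0) = letterAt (wordOf s b) i := by
  rw [mem_range, ← length_sort (α := ℕ) (· ≤ ·)] at hi
  rw [List.getD_eq_getElem _ _ hi]
  conv_rhs => rw [letterAt, wordOf, List.getD_eq_getElem _ _ (by simpa using hi),
    List.getElem_map]

theorem IsCumulants.moment_wordOf {M L : Word → ℂ} (hL : IsCumulants M L) (hb : b.Nonempty) :
    M (wordOf s b) = ∑ Q ∈ APfin s b, ∏ c ∈ Q, L (wordOf s c) := by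
  have hne : wordOf s b ≠ [] := by
    rw [← List.length_pos_iff, length_wordOf]
    exact hb.card_pos
  rw [hL _ hne, length_wordOf]
  exact (sum_prod_wordOf_APfin_image (strictMonoOn_sort_getD b) (image_sort_getD_range b)
    (fun i hi => letterAt_sort_getD hi) L).symm

end Subwords

theorem IsCumulants.prod_moment_eq_sum_refines {M L : Word → ℂ} (hL : IsCumulants M L)
    {s : Word} {g : Finset ℕ} {u : Finset (Finset ℕ)} (hu : u ∈ APfin s g) :
    ∏ b ∈ u, M (wordOf s b) = ∑ v ∈ APfin s g with Refines v u, ∏ c ∈ v, L (wordOf s c) := by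
  rw [← prod_sum_APfin_eq_sum_refines hu]
  exact prod_congr rfl fun b hb => hL.moment_wordOf ((mem_APfin.1 hu).1.1 b hb)

open scoped Classical in
theorem cumulant_mobius_inversion_general (M L : Word → ℂ)
    (hL : IsCumulants M L)
    (s : Word) (hs : s ≠ [])
    (m : Finset (Finset ℕ) → Finset (Finset ℕ) → ℂ)
    (hm : IsMobius s (Finset.range s.length) m) :
    L s = ∑ u ∈ APfin s (Finset.range s.length),
        m u {Finset.range s.length} * ∏ b ∈ u, M (wordOf s b) := by
  set g := range s.length
  have htop : {g} ∈ APfin s g := singleton_mem_APfin (nonempty_range_iff.2 (by simpa using hs))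
  have hpart : ∀ {P}, P ∈ APfin s g → IsPartitionOn g P := fun hP => (mem_APfin.1 hP).1
  have hinv := sum_mobius_mul_eq (fun P _ => refines_refl P) (fun _ _ _ _ _ _ h h' => h.trans h')
    (fun P hP Q hQ => (hpart hP).eq_of_refines (hpart hQ)) hm.1 hm.2
    (fun u hu => hL.prod_moment_eq_sum_refines hu) htop
  rw [prod_singleton, wordOf_range] at hinv
  rw [← hinv, filter_true_of_mem fun u hu => (hpart hu).refines_singleton]

open scoped Classical in
/-- Inversion formula for admissible cumulants:
`L(s) = Σ_{u ∈ AP(s)} m(u|1_s) M(u)`. -/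
theorem cumulant_mobius_inversion (M L : Word → ℂ)
    (hM1 : M [] = 1) (hL : IsCumulants M L)
    (s : Word) (hs : s ≠ [])
    (m : Finset (Finset ℕ) → Finset (Finset ℕ) → ℂ)
    (hm : IsMobius s (Finset.range s.length) m) :
    L s = ∑ u ∈ APfin s (Finset.range s.length),
        m u {Finset.range s.length} * ∏ b ∈ u, M (wordOf s b) :=
  cumulant_mobius_inversion_general M L hL s hs m hm
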